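/- Let x = (y₁, y₂, y₃, v₁, v₂, v₃) ∈ ℝ⁶ satisfy F(x) = 0 with all six coordinates positive, and assume R₁ ≠ R₂ and R₁ ≠ R₃. Then: (i) 1 − y₁ − y₂ − y₃ = 1/R₁; (ii) v₁ = (p₁/c)·y₁; (iii) y₂ = (p₂/q₂)·(R₂/(R₁−R₂))·y₁; (iv) y₃ = (p₂q₃/(q₂r₃))·(R₂R₃/((R₁−R₂)(R₁−R₃)))·y₁; (v) v₂ = (R₁/R₂)·(q₂/c)·y₂; (vi) v₃ = (R₁/R₃)·(r₃/c)·y₃. -/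

import Mathlib

/-!
At a positive equilibrium, the equations of strain 1 (`α₁ β v₁ = δ₁ y₁`, `c v₁ = p₁ y₁`) force
`β = 1 / R₁`, since `y₁ ≠ 0`. Once `β` is known, the infection equation of strain `i` gives
`v_i = (R₁ / R_i) (q_i / c) y_i`, and substituting this into its virion equation
`c v_i = s_i + q_i y_i` (source `s_i` fed by mutation from the previous strain) makes it linear in
`y_i` with coefficient proportional to `R₁ - R_i`. Solving it for strain 2 and then for strain 3
expresses everything in terms of `y₁`.
-/

/-- The HBV three-strain vector field `F(y₁,y₂,y₃,v₁,v₂,v₃)`, with `β = 1 − y₁ − y₂ − y₃`. -/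
noncomputable def Fhbv (α₁ α₂ α₃ δ₁ δ₂ δ₃ c p₁ p₂ q₂ q₃ r₃ : ℝ) (x : Fin 6 → ℝ) :
    Fin 6 → ℝ :=
  ![α₁ * (1 - x 0 - x 1 - x 2) * x 3 - δ₁ * x 0,
    α₂ * (1 - x 0 - x 1 - x 2) * x 4 - δ₂ * x 1,
    α₃ * (1 - x 0 - x 1 - x 2) * x 5 - δ₃ * x 2,
    p₁ * x 0 - c * x 3,
    p₂ * x 0 + q₂ * x 1 - c * x 4,
    q₃ * x 1 + r₃ * x 2 - c * x 5]

theorem Fhbv_eq_zero_iff {α₁ α₂ α₃ δ₁ δ₂ δ₃ c p₁ p₂ q₂ q₃ r₃ : ℝ} {x : Fin 6 → ℝ} :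
    Fhbv α₁ α₂ α₃ δ₁ δ₂ δ₃ c p₁ p₂ q₂ q₃ r₃ x = 0 ↔
      α₁ * (1 - x 0 - x 1 - x 2) * x 3 = δ₁ * x 0 ∧
      α₂ * (1 - x 0 - x 1 - x 2) * x 4 = δ₂ * x 1 ∧
      α₃ * (1 - x 0 - x 1 - x 2) * x 5 = δ₃ * x 2 ∧
      c * x 3 = p₁ * x 0 ∧
      c * x 4 = p₂ * x 0 + q₂ * x 1 ∧
      c * x 5 = q₃ * x 1 + r₃ * x 2 := by
  simp only [funext_iff, Fin.forall_fin_succ, Fhbv]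
  simp [sub_eq_zero, eq_comm (b := c * _)]

theorem steady_fraction_eq {α δ c p β v y : ℝ} (hy : y ≠ 0) (hαp : α * p ≠ 0)
    (hinf : α * β * v = δ * y) (hvir : c * v = p * y) :
    β = 1 / (α * p / (c * δ)) := by
  have hβ : β * (α * p) = c * δ :=
    mul_right_cancel₀ hy (by linear_combination c * hinf - α * β * hvir)
  rw [one_div_div, eq_div_iff hαp, hβ]

theorem steady_virion_eq {α δ c q R₁ β v y : ℝ} (hα : α ≠ 0) (hc : c ≠ 0)
    (hq : q ≠ 0) (hR₁ : R₁ ≠ 0) (hβ : β = 1 / R₁) (hinf : α * β * v = δ * y) :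
    v = R₁ / (α * q / (c * δ)) * (q / c) * y := by
  subst hβ
  field_simp at hinf ⊢
  linear_combination hinf

theorem steady_load_eq {c q s R₁ R v y : ℝ} (hc : c ≠ 0) (hq : q ≠ 0) (hR : R ≠ 0)
    (hR₁R : R₁ ≠ R) (hv : v = R₁ / R * (q / c) * y) (hvir : c * v = s + q * y) :
    y = s / q * (R / (R₁ - R)) := by
  have hsub : R₁ - R ≠ 0 := sub_ne_zero.mpr hR₁R
  subst hv
  field_simp at hvir ⊢
  linear_combination hvir

theorem stmt_9_general (α₁ α₂ α₃ δ₁ δ₂ δ₃ c p₁ p₂ q₂ q₃ r₃ : ℝ)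
    (hα₁ : 0 < α₁) (hα₂ : 0 < α₂) (hα₃ : 0 < α₃)
    (hδ₁ : 0 < δ₁) (hδ₂ : 0 < δ₂) (hδ₃ : 0 < δ₃) (hc : 0 < c)
    (hp₁ : 0 < p₁) (hq₂ : 0 < q₂) (hr₃ : 0 < r₃)
    (x : Fin 6 → ℝ) (hx : ∀ i, 0 < x i)
    (hF : Fhbv α₁ α₂ α₃ δ₁ δ₂ δ₃ c p₁ p₂ q₂ q₃ r₃ x = 0)
    (h12 : α₁ * p₁ / (c * δ₁) ≠ α₂ * q₂ / (c * δ₂))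
    (h13 : α₁ * p₁ / (c * δ₁) ≠ α₃ * r₃ / (c * δ₃)) :
    let R₁ : ℝ := α₁ * p₁ / (c * δ₁)
    let R₂ : ℝ := α₂ * q₂ / (c * δ₂)
    let R₃ : ℝ := α₃ * r₃ / (c * δ₃)
    1 - x 0 - x 1 - x 2 = 1 / R₁ ∧
      x 3 = (p₁ / c) * x 0 ∧
      x 1 = (p₂ / q₂) * (R₂ / (R₁ - R₂)) * x 0 ∧
      x 2 = (p₂ * q₃ / (q₂ * r₃)) * (R₂ * R₃ / ((R₁ - R₂) * (R₁ - R₃))) * x 0 ∧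
      x 4 = (R₁ / R₂) * (q₂ / c) * x 1 ∧
      x 5 = (R₁ / R₃) * (r₃ / c) * x 2 := by
  intro R₁ R₂ R₃
  obtain ⟨inf₁, inf₂, inf₃, vir₁, vir₂, vir₃⟩ := Fhbv_eq_zero_iff.mp hF
  have hR₁ : R₁ ≠ 0 := by positivity
  have hβ : 1 - x 0 - x 1 - x 2 = 1 / R₁ :=
    steady_fraction_eq (hx 0).ne' (by positivity) inf₁ vir₁
  have hv₂ := steady_virion_eq hα₂.ne' hc.ne' hq₂.ne' hR₁ hβ inf₂
  have hv₃ := steady_virion_eq hα₃.ne' hc.ne' hr₃.ne' hR₁ hβ inf₃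
  have hy₂ : x 1 = p₂ * x 0 / q₂ * (R₂ / (R₁ - R₂)) :=
    steady_load_eq hc.ne' hq₂.ne' (by positivity) h12 hv₂ vir₂
  have hy₃ : x 2 = q₃ * x 1 / r₃ * (R₃ / (R₁ - R₃)) :=
    steady_load_eq hc.ne' hr₃.ne' (by positivity) h13 hv₃ vir₃
  refine ⟨hβ, ?_, ?_, ?_, hv₂, hv₃⟩
  · rw [div_mul_eq_mul_div, eq_div_iff hc.ne', mul_comm, vir₁]
  · rw [hy₂]; ring
  · rw [hy₃, hy₂, ← div_mul_div_comm p₂, ← div_mul_div_comm R₂]; ring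

/-- if x = (y₁,…,v₃) is a coordinatewise-positive zero of F and R₁ ≠ R₂,
R₁ ≠ R₃, then the six stated identities hold. -/
theorem stmt_9 (α₁ α₂ α₃ δ₁ δ₂ δ₃ c p₁ p₂ q₂ q₃ r₃ : ℝ)
    (hα₁ : 0 < α₁) (hα₂ : 0 < α₂) (hα₃ : 0 < α₃)
    (hδ₁ : 0 < δ₁) (hδ₂ : 0 < δ₂) (hδ₃ : 0 < δ₃) (hc : 0 < c)
    (hp₁ : 0 < p₁) (hp₂ : 0 < p₂) (hq₂ : 0 < q₂) (hq₃ : 0 < q₃) (hr₃ : 0 < r₃)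
    (x : Fin 6 → ℝ) (hx : ∀ i, 0 < x i)
    (hF : Fhbv α₁ α₂ α₃ δ₁ δ₂ δ₃ c p₁ p₂ q₂ q₃ r₃ x = 0)
    (h12 : α₁ * p₁ / (c * δ₁) ≠ α₂ * q₂ / (c * δ₂))
    (h13 : α₁ * p₁ / (c * δ₁) ≠ α₃ * r₃ / (c * δ₃)) :
    let R₁ : ℝ := α₁ * p₁ / (c * δ₁)
    let R₂ : ℝ := α₂ * q₂ / (c * δ₂)
    let R₃ : ℝ := α₃ * r₃ / (c * δ₃)
    1 - x 0 - x 1 - x 2 = 1 / R₁ ∧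
      x 3 = (p₁ / c) * x 0 ∧
      x 1 = (p₂ / q₂) * (R₂ / (R₁ - R₂)) * x 0 ∧
      x 2 = (p₂ * q₃ / (q₂ * r₃)) * (R₂ * R₃ / ((R₁ - R₂) * (R₁ - R₃))) * x 0 ∧
      x 4 = (R₁ / R₂) * (q₂ / c) * x 1 ∧
      x 5 = (R₁ / R₃) * (r₃ / c) * x 2 :=
  stmt_9_general α₁ α₂ α₃ δ₁ δ₂ δ₃ c p₁ p₂ q₂ q₃ r₃ hα₁ hα₂ hα₃ hδ₁ hδ₂ hδ₃ hc hp₁ hq₂ hr₃ x hx hF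
    h12 h13
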